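/- arXiv:1608.00120 — 3 statements merged into one kernel-verified Lean document; each statement's English description precedes it below -/
import Mathlib

section
/- Let X be a nonnegative real-valued random variable, let θ ≥ 0 and δ > 0. Then E[(1+X)^{−θ}] ≤ U_{δ,X}(θ), where U_{δ,X}(θ) = inf over natural numbers N of { (1+δN)^{−θ} + Σ_{k=1}^{N} a_{θ,δ}(k)·F_X(kδ) } and a_{θ,δ}(k) = (1+(k−1)δ)^{−θ} − (1+kδ)^{−θ}. (This is Lemma 1 of the paper, with the minimization over u ≥ 0 and N_δ(u) = ⌊u/δ⌋ rewritten as an infimum over natural numbers N.) -/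
open MeasureTheory ProbabilityTheory Finset

/-! The function `x ↦ (1+x)^{-θ}` is antitone on `[0, ∞)`, so it lies below the step function
that is constant on each grid cell `((k-1)δ, kδ]` with the value at the cell's left end, and equal
to `(1+Nδ)^{-θ}` beyond `Nδ`. Written as `(1+Nδ)^{-θ} + ∑ a(k) 1{x ≤ kδ}`, this step function has
expectation `(1+Nδ)^{-θ} + ∑ a(k) F_X(kδ)`; taking expectations and then the infimum over `N`
gives the bound. -/

/-- The upper bound `U_{δ,X}(θ)` of Lemma 1 of the paper, expressed in terms of the
c.d.f. `F` of the random variable: the infimum over the number of discretization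
steps `N : ℕ` of `(1+δN)^{-θ} + ∑_{k=1}^{N} a_{θ,δ}(k) · F(kδ)`, where
`a_{θ,δ}(k) = (1+(k-1)δ)^{-θ} - (1+kδ)^{-θ}`. -/
noncomputable def Ubound (F : ℝ → ℝ) (δ θ : ℝ) : ℝ :=
  ⨅ N : ℕ,
    ((1 + δ * N) ^ (-θ) +
      ∑ k ∈ Icc 1 N,
        ((1 + ((k : ℝ) - 1) * δ) ^ (-θ) - (1 + (k : ℝ) * δ) ^ (-θ)) * F ((k : ℝ) * δ))

/-- The telescoping sum over the grid points `kδ ≥ x` collapses to `g(k₀δ - δ) - g(Nδ)` with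
`k₀δ` the first grid point `≥ x`, and `g x ≤ g(k₀δ - δ)` by monotonicity. -/
theorem AntitoneOn.le_add_sum_grid_indicator {g : ℝ → ℝ} (hg : AntitoneOn g (Set.Ici 0))
    {δ x : ℝ} (hδ : 0 ≤ δ) (hx : 0 ≤ x) (N : ℕ) :
    g x ≤ g (N * δ) +
      ∑ k ∈ Icc 1 N, (g ((k - 1) * δ) - g (k * δ)) * (Set.Iic ((k : ℝ) * δ)).indicator 1 x := by
  induction N with
  | zero => simpa using hg (Set.mem_Ici.2 le_rfl) hx hx
  | succ N ih =>
    rw [sum_Icc_succ_top (by omega)]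
    by_cases hxN : x ≤ (N + 1 : ℕ) * δ
    · simp only [Set.indicator_of_mem (Set.mem_Iic.2 hxN), Pi.one_apply, mul_one]
      push_cast at ih ⊢
      rw [add_sub_cancel_right]
      linarith
    · have hgrid : ∀ k ∈ Icc 1 N, (Set.Iic ((k : ℝ) * δ)).indicator (1 : ℝ → ℝ) x = 0 := by
        intro k hk
        refine Set.indicator_of_notMem (fun hk' => hxN ?_) _
        have : (k : ℝ) ≤ (N + 1 : ℕ) := by exact_mod_cast (mem_Icc.1 hk).2.trans N.le_succ
        exact (Set.mem_Iic.1 hk').trans (mul_le_mul_of_nonneg_right this hδ)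
      rw [sum_eq_zero fun k hk => by rw [hgrid k hk, mul_zero],
        Set.indicator_of_notMem (mt Set.mem_Iic.1 hxN), mul_zero, add_zero, add_zero]
      exact hg (Set.mem_Ici.2 (by positivity)) hx (not_le.1 hxN).le

theorem AntitoneOn.integral_comp_le_add_sum_grid {g : ℝ → ℝ} (hg : AntitoneOn g (Set.Ici 0))
    {Ω : Type*} [MeasurableSpace Ω] (μ : Measure Ω) [IsProbabilityMeasure μ] {X : Ω → ℝ}
    (hX : Measurable X) (hX₀ : ∀ ω, 0 ≤ X ω) (hgX : Integrable (fun ω => g (X ω)) μ)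
    {δ : ℝ} (hδ : 0 ≤ δ) (N : ℕ) :
    ∫ ω, g (X ω) ∂μ ≤
      g (N * δ) + ∑ k ∈ Icc 1 N, (g ((k - 1) * δ) - g (k * δ)) * μ.real {ω | X ω ≤ k * δ} := by
  have hstep : ∀ k : ℕ, Integrable
      (fun ω => (g ((k - 1) * δ) - g (k * δ)) * {ω | X ω ≤ k * δ}.indicator 1 ω) μ :=
    fun k => (integrable_const 1 |>.indicator (measurableSet_le hX measurable_const)).const_mul _
  calc ∫ ω, g (X ω) ∂μ
      ≤ ∫ ω, g (N * δ) +
          ∑ k ∈ Icc 1 N, (g ((k - 1) * δ) - g (k * δ)) * {ω | X ω ≤ k * δ}.indicator 1 ω ∂μ :=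
        integral_mono hgX ((integrable_const _).add (integrable_finsetSum _ fun k _ => hstep k))
          fun ω => by
            have := hg.le_add_sum_grid_indicator hδ (hX₀ ω) N
            simp only [← Set.indicator_comp_right, Pi.one_comp] at this
            exact this
    _ = _ := by
      rw [integral_add (integrable_const _) (integrable_finsetSum _ fun k _ => hstep k),
        integral_const, integral_finsetSum _ fun k _ => hstep k, probReal_univ, one_smul]
      refine congrArg _ (sum_congr rfl fun k _ => ?_)
      rw [integral_const_mul, integral_indicator_one (measurableSet_le hX measurable_const)]

/-- Lemma 1 of the paper. For a nonnegative random variable `X`,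
`θ ≥ 0` and `δ > 0`, `E[(1+X)^{-θ}] ≤ U_{δ,X}(θ)`. -/
theorem inverse_moment_le_Ubound
    {Ω : Type*} [MeasureSpace Ω] [IsProbabilityMeasure (ℙ : Measure Ω)]
    (X : Ω → ℝ) (hXmeas : Measurable X) (hXnonneg : ∀ ω, 0 ≤ X ω)
    (θ δ : ℝ) (hθ : 0 ≤ θ) (hδ : 0 < δ) :
    ∫ ω : Ω, (1 + X ω) ^ (-θ) ∂ℙ ≤
      Ubound (fun x => (ℙ {ω : Ω | X ω ≤ x}).toReal) δ θ := by
  have hanti : AntitoneOn (fun x : ℝ => (1 + x) ^ (-θ)) (Set.Ici 0) :=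
    fun x hx y _ hxy => Real.rpow_le_rpow_of_nonpos (by linarith [Set.mem_Ici.1 hx])
      (by linarith) (by linarith)
  have hint : Integrable (fun ω => (1 + X ω) ^ (-θ)) ℙ := by
    refine .of_bound ((measurable_const.add hXmeas).pow_const _).aestronglyMeasurable 1
      (ae_of_all _ fun ω => ?_)
    rw [Real.norm_of_nonneg (by have := hXnonneg ω; positivity)]
    exact Real.rpow_le_one_of_one_le_of_nonpos (by linarith [hXnonneg ω]) (by linarith)
  refine le_ciInf fun N => ?_
  simpa only [mul_comm (N : ℝ) δ, measureReal_def] using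
    hanti.integral_comp_le_add_sum_grid ℙ hXmeas hXnonneg hint hδ.le N
end

section
/- Let θ > 0, δ_b ≥ 0, and let p, q > 0 with p·q < 1. Suppose the bivariate random processes A and S on a common probability space satisfy E[e^{θ·A(u,t)}] ≤ e^{θ·δ_b}·p^{t−u} for all natural numbers 0 ≤ u ≤ t, and E[e^{−θ·S(u,s)}] ≤ q^{s−u} for all natural numbers 0 ≤ u ≤ s. Then for all natural numbers s, t: Σ_{u=0}^{min(s,t)} E[e^{θ·A(u,t)}]·E[e^{−θ·S(u,s)}] ≤ e^{θ·δ_b}·p^{max(t−s,0)}·q^{max(s−t,0)} / (1 − p·q). -/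
open MeasureTheory ProbabilityTheory Finset

/-!
Bound each expectation by its envelope: the `u`-th term is then at most
`e^{θ δ_b} p^{t-s} q^{s-t} (pq)^{min(s,t)-u}`, and the sum over `u` is dominated by the full
geometric series `∑ (pq)^k = 1/(1-pq)`.
-/

lemma sum_range_succ_pow_sub_le {x : ℝ} (hx0 : 0 ≤ x) (hx1 : x < 1) (m : ℕ) :
    ∑ u ∈ range (m + 1), x ^ (m - u) ≤ 1 / (1 - x) := by
  have hreflect : ∑ u ∈ range (m + 1), x ^ (m - u) = ∑ k ∈ range (m + 1), x ^ k :=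
    sum_range_reflect (x ^ ·) (m + 1)
  rw [hreflect, range_eq_Ico, ← pow_zero x]
  exact geom_sum_Ico_le_of_lt_one hx0 hx1

lemma pow_sub_mul_pow_sub_eq {p q : ℝ} {s t u : ℕ} (hu : u ≤ min s t) :
    p ^ (t - u) * q ^ (s - u) = p ^ (t - s) * q ^ (s - t) * (p * q) ^ (min s t - u) := by
  rw [show t - u = (t - s) + (min s t - u) by omega,
    show s - u = (s - t) + (min s t - u) by omega, pow_add, pow_add, mul_pow]
  ring

lemma sum_pow_sub_mul_pow_sub_le {p q : ℝ} (hp : 0 ≤ p) (hq : 0 ≤ q) (hpq : p * q < 1)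
    (s t : ℕ) :
    ∑ u ∈ range (min s t + 1), p ^ (t - u) * q ^ (s - u) ≤
      p ^ (t - s) * q ^ (s - t) / (1 - p * q) := by
  calc ∑ u ∈ range (min s t + 1), p ^ (t - u) * q ^ (s - u)
      = p ^ (t - s) * q ^ (s - t) * ∑ u ∈ range (min s t + 1), (p * q) ^ (min s t - u) := by
        rw [mul_sum]
        exact sum_congr rfl fun u hu ↦
          pow_sub_mul_pow_sub_eq (Nat.lt_succ_iff.mp (mem_range.mp hu))
    _ ≤ p ^ (t - s) * q ^ (s - t) * (1 / (1 - p * q)) := by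
        gcongr
        exact sum_range_succ_pow_sub_le (mul_nonneg hp hq) hpq _
    _ = p ^ (t - s) * q ^ (s - t) / (1 - p * q) := mul_one_div _ _

theorem sum_MGF_product_bound_general
    {Ω : Type*} [MeasureSpace Ω]
    (θ δb p q : ℝ) (hp : 0 < p) (hq : 0 < q)
    (hpq : p * q < 1)
    (A S : ℕ → ℕ → Ω → ℝ)
    (hA : ∀ u t : ℕ, u ≤ t →
      ∫ ω : Ω, Real.exp (θ * A u t ω) ∂ℙ ≤ Real.exp (θ * δb) * p ^ (t - u))
    (hS : ∀ u s : ℕ, u ≤ s →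
      ∫ ω : Ω, Real.exp (-θ * S u s ω) ∂ℙ ≤ q ^ (s - u))
    (s t : ℕ) :
    ∑ u ∈ range (min s t + 1),
        (∫ ω : Ω, Real.exp (θ * A u t ω) ∂ℙ) * (∫ ω : Ω, Real.exp (-θ * S u s ω) ∂ℙ) ≤
      Real.exp (θ * δb) * p ^ (t - s) * q ^ (s - t) / (1 - p * q) := by
  have hterm : ∀ u ∈ range (min s t + 1),
      (∫ ω : Ω, Real.exp (θ * A u t ω) ∂ℙ) * (∫ ω : Ω, Real.exp (-θ * S u s ω) ∂ℙ) ≤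
        Real.exp (θ * δb) * (p ^ (t - u) * q ^ (s - u)) := fun u hu ↦ by
    have hu : u ≤ min s t := Nat.lt_succ_iff.mp (mem_range.mp hu)
    rw [← mul_assoc]
    exact mul_le_mul (hA u t (hu.trans (min_le_right s t))) (hS u s (hu.trans (min_le_left s t)))
      (integral_nonneg fun _ ↦ (Real.exp_pos _).le) (by positivity)
  calc _ ≤ ∑ u ∈ range (min s t + 1), Real.exp (θ * δb) * (p ^ (t - u) * q ^ (s - u)) :=
        sum_le_sum hterm
    _ = Real.exp (θ * δb) * ∑ u ∈ range (min s t + 1), p ^ (t - u) * q ^ (s - u) :=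
        (mul_sum _ _ _).symm
    _ ≤ Real.exp (θ * δb) * (p ^ (t - s) * q ^ (s - t) / (1 - p * q)) := by
        gcongr
        exact sum_pow_sub_mul_pow_sub_le hp.le hq.le hpq s t
    _ = _ := by ring

/-- the bound (17) in the proof of Theorem 2 of the paper. Under the
`(σ(θ),ρ(θ))`-type envelopes `E[e^{θ A(u,t)}] ≤ e^{θ δ_b} p^{t-u}` and
`E[e^{-θ S(u,s)}] ≤ q^{s-u}`, with stability `p·q < 1`, for all `s, t`:
`∑_{u=0}^{min(s,t)} E[e^{θ A(u,t)}]·E[e^{-θ S(u,s)}]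
  ≤ e^{θ δ_b} p^{max(t-s,0)} q^{max(s-t,0)} / (1-pq)`
(the exponents being natural-number subtractions). -/
theorem sum_MGF_product_bound
    {Ω : Type*} [MeasureSpace Ω] [IsProbabilityMeasure (ℙ : Measure Ω)]
    (θ δb p q : ℝ) (hθ : 0 < θ) (hδb : 0 ≤ δb) (hp : 0 < p) (hq : 0 < q)
    (hpq : p * q < 1)
    (A S : ℕ → ℕ → Ω → ℝ)
    (hA : ∀ u t : ℕ, u ≤ t →
      ∫ ω : Ω, Real.exp (θ * A u t ω) ∂ℙ ≤ Real.exp (θ * δb) * p ^ (t - u))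
    (hS : ∀ u s : ℕ, u ≤ s →
      ∫ ω : Ω, Real.exp (-θ * S u s ω) ∂ℙ ≤ q ^ (s - u))
    (s t : ℕ) :
    ∑ u ∈ range (min s t + 1),
        (∫ ω : Ω, Real.exp (θ * A u t ω) ∂ℙ) * (∫ ω : Ω, Real.exp (-θ * S u s ω) ∂ℙ) ≤
      Real.exp (θ * δb) * p ^ (t - s) * q ^ (s - t) / (1 - p * q) :=
  sum_MGF_product_bound_general θ δb p q hp hq hpq A S hA hS s t
end

section
/- Let a_i and s_i, i ∈ ℕ, be nonnegative random variables on a probability space, define A(τ,t) = Σ_{i=τ}^{t−1} a_i and S(τ,t) = Σ_{i=τ}^{t−1} s_i, and let D(0,t) satisfy the dynamic-server property D(0,t) ≥ min_{0≤τ≤t} ( A(0,τ) + S(τ,t) ). Let θ > 0, δ_b ≥ 0, and p, q > 0 with p·q < 1; assume that for each 0 ≤ u ≤ t the random variables A(u,t) and S(u,t) are independent, that E[e^{θ·A(u,t)}] ≤ e^{θ·δ_b}·p^{t−u} for all 0 ≤ u ≤ t, and that E[e^{−θ·S(u,t)}] ≤ q^{t−u} for all 0 ≤ u ≤ t. Then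 the backlog B(t) = A(0,t) − D(0,t) satisfies, for every real b, P( B(t) > b ) ≤ e^{θ(δ_b − b)} / (1 − p·q). -/
open MeasureTheory ProbabilityTheory Finset

/-!
On the event `B(t) > b` the dynamic-server property exhibits some `τ ≤ t` with
`A(τ,t) - S(τ,t) > b`, so a union bound over `τ` reduces the claim to these `t + 1` events.
Each is controlled by a Chernoff bound for `A(τ,t) - S(τ,t)`, whose moment generating function
factors by independence into `E[e^{θ A(τ,t)}] · E[e^{-θ S(τ,t)}] ≤ e^{θ δ_b} (p q)^{t-τ}`.
Summing the geometric series gives the factor `1 / (1 - p q)`.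
-/

open Real

theorem exists_lt_sum_sub_sum_of_lt_sub_of_inf'_le {a s : ℕ → ℝ} {d b : ℝ} {t : ℕ}
    (hd : (range (t + 1)).inf' ⟨0, by simp⟩
      (fun τ => (∑ i ∈ Ico 0 τ, a i) + ∑ i ∈ Ico τ t, s i) ≤ d)
    (hb : b < (∑ i ∈ Ico 0 t, a i) - d) :
    ∃ τ ∈ range (t + 1), b < (∑ i ∈ Ico τ t, a i) - ∑ i ∈ Ico τ t, s i := by
  obtain ⟨τ, hτ, hmin⟩ := exists_mem_eq_inf' (⟨0, by simp⟩ : (range (t + 1)).Nonempty)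
    (fun τ => (∑ i ∈ Ico 0 τ, a i) + ∑ i ∈ Ico τ t, s i)
  have hsplit := sum_Ico_consecutive a (Nat.zero_le τ) (Nat.lt_succ_iff.mp (mem_range.mp hτ))
  exact ⟨τ, hτ, by linarith⟩

theorem measureReal_lt_sub_le_of_indepFun {Ω : Type*} [MeasurableSpace Ω] {μ : Measure Ω}
    [IsFiniteMeasure μ] {X Y : Ω → ℝ} {θ : ℝ} (b : ℝ) (hθ : 0 ≤ θ) (hXY : IndepFun X Y μ)
    (hX : Integrable (fun ω => exp (θ * X ω)) μ)
    (hY : Integrable (fun ω => exp (-θ * Y ω)) μ) :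
    μ.real {ω | b < X ω - Y ω} ≤
      exp (-θ * b) * ((∫ ω, exp (θ * X ω) ∂μ) * ∫ ω, exp (-θ * Y ω) ∂μ) := by
  have hXnegY : IndepFun X (-Y) μ := hXY.comp measurable_id measurable_neg
  have hnegY : Integrable (fun ω => exp (θ * (-Y) ω)) μ := by
    simpa only [Pi.neg_apply, mul_neg, neg_mul] using hY
  have hmgf : mgf (X + -Y) μ θ = (∫ ω, exp (θ * X ω) ∂μ) * ∫ ω, exp (-θ * Y ω) ∂μ := by
    rw [hXnegY.mgf_add hX.aestronglyMeasurable hnegY.aestronglyMeasurable, mgf, mgf]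
    simp only [Pi.neg_apply, mul_neg, neg_mul]
  calc μ.real {ω | b < X ω - Y ω}
      ≤ μ.real {ω | b ≤ (X + -Y) ω} :=
        measureReal_mono fun ω (h : b < X ω - Y ω) => by simp [← sub_eq_add_neg, h.le]
    _ ≤ exp (-θ * b) * mgf (X + -Y) μ θ :=
        measure_ge_le_exp_mul_mgf b hθ (hXnegY.integrable_exp_mul_add hX hnegY)
    _ = _ := by rw [hmgf]

theorem integrable_exp_neg_mul_of_nonneg {Ω : Type*} [MeasurableSpace Ω] {μ : Measure Ω}
    [IsFiniteMeasure μ] {Y : Ω → ℝ} {θ : ℝ} (hθ : 0 ≤ θ) (hYm : Measurable Y)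
    (hY : ∀ ω, 0 ≤ Y ω) : Integrable (fun ω => exp (-θ * Y ω)) μ := by
  refine Integrable.of_bound (C := 1) (by fun_prop) (Filter.Eventually.of_forall fun ω => ?_)
  rw [norm_of_nonneg (exp_nonneg _), exp_le_one_iff]
  nlinarith [hY ω]

theorem sum_range_pow_sub_le_one_div {r : ℝ} (hr : 0 ≤ r) (hr1 : r < 1) (t : ℕ) :
    ∑ τ ∈ range (t + 1), r ^ (t - τ) ≤ 1 / (1 - r) := by
  have hreflect : ∑ τ ∈ range (t + 1), r ^ (t - τ) = ∑ k ∈ range (t + 1), r ^ k := by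
    simpa using sum_range_reflect (fun k => r ^ k) (t + 1)
  rw [hreflect, ← Nat.Ico_zero_eq_range]
  simpa using geom_sum_Ico_le_of_lt_one (m := 0) (n := t + 1) hr hr1

/-- probabilistic backlog bound, cf. Theorem 2 of the paper. For a
dynamic server with cumulative arrivals `A(τ,t) = ∑_{i=τ}^{t-1} aᵢ`, service
`S(τ,t) = ∑_{i=τ}^{t-1} sᵢ`, independence of `A(u,t)` and `S(u,t)` for each `u ≤ t`,
envelopes `E[e^{θ A(u,t)}] ≤ e^{θ δ_b} p^{t-u}` and `E[e^{-θ S(u,t)}] ≤ q^{t-u}`, and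
stability `p·q < 1`, the backlog `B(t) = A(0,t) - D(0,t)` satisfies, for every real `b`,
`P(B(t) > b) ≤ e^{θ(δ_b - b)} / (1 - pq)`. -/
theorem backlog_violation_probability_bound
    {Ω : Type*} [MeasureSpace Ω] [IsProbabilityMeasure (ℙ : Measure Ω)]
    (a s : ℕ → Ω → ℝ)
    (hsmeas : ∀ i, Measurable (s i))
    (hs : ∀ i ω, 0 ≤ s i ω)
    (D : ℕ → Ω → ℝ)
    (hD : ∀ (t : ℕ) (ω : Ω),
      (range (t + 1)).inf' ⟨0, by simp⟩
          (fun τ => (∑ i ∈ Ico 0 τ, a i ω) + ∑ i ∈ Ico τ t, s i ω) ≤ D t ω)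
    (θ δb p q : ℝ) (hθ : 0 < θ) (hp : 0 < p) (hq : 0 < q)
    (hpq : p * q < 1) (t : ℕ)
    (hindep : ∀ u : ℕ, u ≤ t →
      IndepFun (fun ω => ∑ i ∈ Ico u t, a i ω) (fun ω => ∑ i ∈ Ico u t, s i ω) ℙ)
    (hAint : ∀ u : ℕ, u ≤ t →
      Integrable (fun ω => Real.exp (θ * ∑ i ∈ Ico u t, a i ω)) ℙ)
    (hA : ∀ u : ℕ, u ≤ t →
      ∫ ω : Ω, Real.exp (θ * ∑ i ∈ Ico u t, a i ω) ∂ℙ ≤ Real.exp (θ * δb) * p ^ (t - u))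
    (hS : ∀ u : ℕ, u ≤ t →
      ∫ ω : Ω, Real.exp (-θ * ∑ i ∈ Ico u t, s i ω) ∂ℙ ≤ q ^ (t - u))
    (b : ℝ) :
    (ℙ {ω : Ω | b < (∑ i ∈ Ico 0 t, a i ω) - D t ω}).toReal ≤
      Real.exp (θ * (δb - b)) / (1 - p * q) := by
  set μ : Measure Ω := ℙ
  set E : ℕ → Set Ω := fun τ => {ω | b < (∑ i ∈ Ico τ t, a i ω) - ∑ i ∈ Ico τ t, s i ω}
  have hcover : {ω : Ω | b < (∑ i ∈ Ico 0 t, a i ω) - D t ω} ⊆ ⋃ τ ∈ range (t + 1), E τ :=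
    fun ω hω =>
      let ⟨τ, hτ, hlt⟩ := exists_lt_sum_sub_sum_of_lt_sub_of_inf'_le (hD t ω) hω
      Set.mem_biUnion hτ hlt
  have hterm : ∀ τ ∈ range (t + 1), μ.real (E τ) ≤ exp (θ * (δb - b)) * (p * q) ^ (t - τ) := by
    intro τ hτ
    have hτt : τ ≤ t := Nat.lt_succ_iff.mp (mem_range.mp hτ)
    have hSint : Integrable (fun ω => exp (-θ * ∑ i ∈ Ico τ t, s i ω)) μ :=
      integrable_exp_neg_mul_of_nonneg hθ.le (measurable_sum _ fun i _ => hsmeas i)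
        fun ω => sum_nonneg fun i _ => hs i ω
    have hSnonneg : 0 ≤ ∫ ω, exp (-θ * ∑ i ∈ Ico τ t, s i ω) ∂μ :=
      integral_nonneg fun ω => (exp_pos _).le
    calc μ.real (E τ) ≤ exp (-θ * b) * ((exp (θ * δb) * p ^ (t - τ)) * q ^ (t - τ)) := by
          refine (measureReal_lt_sub_le_of_indepFun b hθ.le (hindep τ hτt) (hAint τ hτt)
            hSint).trans ?_
          gcongr
          exacts [hA τ hτt, hS τ hτt]
      _ = exp (θ * (δb - b)) * (p * q) ^ (t - τ) := by
          rw [mul_pow, mul_sub, sub_eq_neg_add, exp_add]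
          ring_nf
  calc (μ {ω : Ω | b < (∑ i ∈ Ico 0 t, a i ω) - D t ω}).toReal
      ≤ μ.real (⋃ τ ∈ range (t + 1), E τ) := measureReal_mono hcover (measure_ne_top _ _)
    _ ≤ ∑ τ ∈ range (t + 1), μ.real (E τ) := measureReal_biUnion_finset_le _ _
    _ ≤ ∑ τ ∈ range (t + 1), exp (θ * (δb - b)) * (p * q) ^ (t - τ) := sum_le_sum hterm
    _ ≤ exp (θ * (δb - b)) * (1 / (1 - p * q)) := by
        rw [← mul_sum]
        gcongr
        exact sum_range_pow_sub_le_one_div (by positivity) hpq t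
    _ = exp (θ * (δb - b)) / (1 - p * q) := mul_one_div _ _
end
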